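/- arXiv:1303.1878 — 4 statements merged into one kernel-verified Lean document; each statement's English description precedes it below -/
import Mathlib

section
/- Let H be a Hopf algebra over a field k and π : H → K a surjective Hopf algebra morphism such that ker(π) is left a-normal, i.e. ad_l(a) := Σ a_(2) ⊗ a_(1)S(a_(3)) ∈ ker(π) ⊗ H for all a ∈ ker(π). If the antipode S of H is bijective, then the left and right coinvariant subalgebras coincide: { a ∈ H : (π ⊗ id)Δ(a) = 1 ⊗ a } = { a ∈ H : (id ⊗ π)Δ(a) = a ⊗ 1 }. -/
/-!
In the convolution algebra of linear maps `H → K ⊗ H`, the algebra map `j = 1 ⊗ -` has convolution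
inverse `j ∘ S`, and `(π ⊗ id) ∘ ad_l` is the product `Q = j * (π ⊗ 1) * (j ∘ S)`, that is
`Q x = Σ π(x₍₂₎) ⊗ x₍₁₎ S(x₍₃₎)`. Left a-normality makes `Q` vanish on `ker π`. As tensoring over a
field is exact, a linear map on `H ⊗ H` vanishing on `ker π ⊗ H` sees its argument only through
`π ⊗ id` (and symmetrically).

For a left coinvariant `a`, evaluate `x ⊗ y ↦ Q(x) j(y)` at `Δa` and at `1 ⊗ a`: this gives
`(Q * j)(a) = (j * (π ⊗ 1))(a)`, the flip of `(id ⊗ π)Δa`, and `1 ⊗ a`. For a right coinvariant `a`,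
evaluate `y ⊗ x ↦ j(S y) Q(x)` at `Δa` and at `a ⊗ 1`: this gives
`((j ∘ S) * Q)(a) = ((π ⊗ 1) * (j ∘ S))(a) = (π ⊗ S)Δa` and `1 ⊗ S a`; then cancel the injective `S`.
-/

open TensorProduct Coalgebra HopfAlgebra

/-- The left adjoint coaction `a ↦ Σ a₍₂₎ ⊗ a₍₁₎ S(a₍₃₎)`, built from the
comultiplication and a given antipode map `S`. -/
noncomputable def adlWith (k H : Type*) [CommRing k] [Ring H] [Bialgebra k H]
    (S : H →ₗ[k] H) : H →ₗ[k] H ⊗[k] H :=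
  (LinearMap.lTensor H (LinearMap.mul' k H)) ∘ₗ
  (TensorProduct.assoc k H H H).toLinearMap ∘ₗ
  (LinearMap.rTensor H (TensorProduct.comm k H H).toLinearMap) ∘ₗ
  (TensorProduct.assoc k H H H).symm.toLinearMap ∘ₗ
  (LinearMap.lTensor H (LinearMap.lTensor H S)) ∘ₗ
  (LinearMap.lTensor H Coalgebra.comul) ∘ₗ
  Coalgebra.comul

/-- The right adjoint coaction `a ↦ Σ a₍₂₎ ⊗ S(a₍₁₎) a₍₃₎`. -/
noncomputable def adrWith (k H : Type*) [CommRing k] [Ring H] [Bialgebra k H]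
    (S : H →ₗ[k] H) : H →ₗ[k] H ⊗[k] H :=
  (LinearMap.lTensor H (LinearMap.mul' k H)) ∘ₗ
  (TensorProduct.assoc k H H H).toLinearMap ∘ₗ
  (LinearMap.rTensor H (TensorProduct.comm k H H).toLinearMap) ∘ₗ
  (TensorProduct.assoc k H H H).symm.toLinearMap ∘ₗ
  (LinearMap.rTensor (H ⊗[k] H) S) ∘ₗ
  (LinearMap.lTensor H Coalgebra.comul) ∘ₗ
  Coalgebra.comul

/-- The left adjoint coaction of a Hopf algebra. -/
noncomputable def adl (k H : Type*) [CommRing k] [Ring H] [HopfAlgebra k H] :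
    H →ₗ[k] H ⊗[k] H :=
  adlWith k H (HopfAlgebra.antipode (R := k))

/-- The right adjoint coaction of a Hopf algebra. -/
noncomputable def adr (k H : Type*) [CommRing k] [Ring H] [HopfAlgebra k H] :
    H →ₗ[k] H ⊗[k] H :=
  adrWith k H (HopfAlgebra.antipode (R := k))

open WithConv

section Flat

variable {R M N P Q : Type*} [CommRing R] [AddCommGroup M] [Module R M] [AddCommGroup N]
  [Module R N] [AddCommGroup P] [Module R P] [AddCommGroup Q] [Module R Q] [Module.Flat R P]

theorem LinearMap.apply_eq_of_rTensor_eq {π : M →ₗ[R] N} {f : M ⊗[R] P →ₗ[R] Q}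
    (hf : ∀ x ∈ ker π, ∀ y, f (x ⊗ₜ y) = 0) {u v : M ⊗[R] P}
    (huv : π.rTensor P u = π.rTensor P v) : f u = f v := by
  have hker : f ∘ₗ (ker π).subtype.rTensor P = 0 := TensorProduct.ext' fun x y ↦ hf x x.2 y
  obtain ⟨w, hw⟩ := (Module.Flat.rTensor_exact P (exact_subtype_ker_map π) (u - v)).mp
    (by rw [map_sub, huv, sub_self])
  rw [← sub_eq_zero, ← map_sub, ← hw, ← comp_apply, hker, zero_apply]

theorem LinearMap.apply_eq_of_lTensor_eq {π : M →ₗ[R] N} {f : P ⊗[R] M →ₗ[R] Q}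
    (hf : ∀ x ∈ ker π, ∀ y, f (y ⊗ₜ x) = 0) {u v : P ⊗[R] M}
    (huv : π.lTensor P u = π.lTensor P v) : f u = f v := by
  have hker : f ∘ₗ (ker π).subtype.lTensor P = 0 := TensorProduct.ext' fun y x ↦ hf x x.2 y
  obtain ⟨w, hw⟩ := (Module.Flat.lTensor_exact P (exact_subtype_ker_map π) (u - v)).mp
    (by rw [map_sub, huv, sub_self])
  rw [← sub_eq_zero, ← map_sub, ← hw, ← comp_apply, hker, zero_apply]

end Flat

theorem TensorProduct.map_mapIncl_ker_eq_zero {R M N P Q : Type*} [CommRing R] [AddCommGroup M]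
    [Module R M] [AddCommGroup N] [Module R N] [AddCommGroup P] [Module R P] [AddCommGroup Q]
    [Module R Q] (π : M →ₗ[R] N) (g : P →ₗ[R] Q) (p : Submodule R P)
    (ξ : LinearMap.ker π ⊗[R] p) : map π g (mapIncl (LinearMap.ker π) p ξ) = 0 := by
  rw [← LinearMap.comp_apply, show map π g ∘ₗ mapIncl (LinearMap.ker π) p = 0 from
    ext' fun x y ↦ by simp [mapIncl, LinearMap.mem_ker.mp x.2]]
  rfl

theorem AlgHom.toConv_comp_antipode_mul_toConv {R H A : Type*} [CommSemiring R] [Semiring H]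
    [HopfAlgebra R H] [Semiring A] [Algebra R A] (f : H →ₐ[R] A) :
    toConv (f.toLinearMap ∘ₗ antipode R) * toConv f.toLinearMap = 1 := by
  have := LinearMap.algHom_comp_convMul_distrib f (toConv (antipode R)) (toConv LinearMap.id)
  rw [LinearMap.antipode_mul_id, LinearMap.comp_id] at this
  apply ofConv_injective
  rw [← this]
  ext
  simp

section Coinvariants

variable {R H K : Type*} [CommRing R] [Ring H] [HopfAlgebra R H]

theorem adl_one : adl R H 1 = 1 := by
  simp [adl, adlWith, Algebra.TensorProduct.one_def]

open Algebra.TensorProduct in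
theorem toConv_adl :
    toConv (adl R H) = toConv (includeRight : H →ₐ[R] H ⊗[R] H).toLinearMap *
      (toConv (includeLeft : H →ₐ[R] H ⊗[R] H).toLinearMap *
        toConv ((includeRight : H →ₐ[R] H ⊗[R] H).toLinearMap ∘ₗ antipode R)) := by
  let F : H ⊗[R] (H ⊗[R] H) →ₗ[R] H ⊗[R] H := (LinearMap.mul' R H).lTensor H ∘ₗ
    (TensorProduct.assoc R H H H).toLinearMap ∘ₗ
    (TensorProduct.comm R H H).toLinearMap.rTensor H ∘ₗ
    (TensorProduct.assoc R H H H).symm.toLinearMap ∘ₗ ((antipode R).lTensor H).lTensor H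
  have hadl : adl R H = F ∘ₗ comul.lTensor H ∘ₗ comul := rfl
  have hF : F = LinearMap.mul' R (H ⊗[R] H) ∘ₗ
      map (includeRight : H →ₐ[R] H ⊗[R] H).toLinearMap (LinearMap.mul' R (H ⊗[R] H)) ∘ₗ
      (map (includeLeft : H →ₐ[R] H ⊗[R] H).toLinearMap
        ((includeRight : H →ₐ[R] H ⊗[R] H).toLinearMap ∘ₗ antipode R)).lTensor H := by
    ext x y z
    simp [F]
  rw [hadl, hF]
  simp only [LinearMap.convMul_def, ← LinearMap.map_comp_lTensor, LinearMap.lTensor_comp,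
    LinearMap.comp_assoc]

variable [Ring K] [Algebra R K]

local notation "ι₁" => AlgHom.toLinearMap (Algebra.TensorProduct.includeLeft : K →ₐ[R] K ⊗[R] H)
local notation "ι₂" => AlgHom.toLinearMap (Algebra.TensorProduct.includeRight : H →ₐ[R] K ⊗[R] H)

noncomputable def mapAdl (π : H →ₐ[R] K) : H →ₗ[R] K ⊗[R] H :=
  (Algebra.TensorProduct.map π (AlgHom.id R H)).toLinearMap ∘ₗ adl R H

theorem mapAdl_one (π : H →ₐ[R] K) : mapAdl π 1 = 1 := by
  rw [mapAdl, LinearMap.comp_apply, adl_one, AlgHom.toLinearMap_apply, map_one]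

theorem toConv_mapAdl (π : H →ₐ[R] K) :
    toConv (mapAdl π) = toConv ι₂ * (toConv (ι₁ ∘ₗ π.toLinearMap) * toConv (ι₂ ∘ₗ antipode R)) := by
  rw [mapAdl, show adl R H = ofConv (toConv (adl R H)) from rfl, toConv_adl,
    LinearMap.algHom_comp_convMul_distrib, ofConv_toConv, LinearMap.algHom_comp_convMul_distrib]
  simp only [← LinearMap.comp_assoc, ← AlgHom.comp_toLinearMap,
    Algebra.TensorProduct.map_comp_includeLeft, Algebra.TensorProduct.map_comp_includeRight,
    AlgHom.comp_id]

variable [Module.Flat R H] (π : H →ₐ[R] K)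

theorem lTensor_comul_eq_of_rTensor_comul_eq
    (hπ : ∀ x ∈ LinearMap.ker π.toLinearMap, mapAdl π x = 0) {a : H}
    (ha : π.toLinearMap.rTensor H (comul a) = 1 ⊗ₜ a) :
    π.toLinearMap.lTensor H (comul a) = a ⊗ₜ 1 := by
  have hT := LinearMap.apply_eq_of_rTensor_eq (π := π.toLinearMap) (u := comul a) (v := 1 ⊗ₜ a)
    (f := LinearMap.mul' R (K ⊗[R] H) ∘ₗ map (mapAdl π) ι₂)
    (fun x hx y ↦ by simp [hπ x hx]) (by simp [ha])
  have hconv : toConv (mapAdl π) * toConv ι₂ = toConv ι₂ * toConv (ι₁ ∘ₗ π.toLinearMap) := by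
    rw [toConv_mapAdl, mul_assoc, mul_assoc, AlgHom.toConv_comp_antipode_mul_toConv, mul_one]
  have hflip : LinearMap.mul' R (K ⊗[R] H) ∘ₗ map ι₂ (ι₁ ∘ₗ π.toLinearMap) =
      (TensorProduct.comm R H K).toLinearMap ∘ₗ π.toLinearMap.lTensor H := by
    ext x y
    simp
  have hΔ := congr(ofConv $hconv a)
  rw [LinearMap.convMul_apply, LinearMap.convMul_apply, ← LinearMap.comp_apply (LinearMap.mul' _ _),
    ← LinearMap.comp_apply (LinearMap.mul' _ _), hflip] at hΔ
  rw [hΔ] at hT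
  apply (TensorProduct.comm R H K).injective
  simpa [mapAdl_one] using hT

theorem rTensor_comul_eq_of_lTensor_comul_eq [Module.Flat R K]
    (hS : Function.Injective (antipode R (A := H)))
    (hπ : ∀ x ∈ LinearMap.ker π.toLinearMap, mapAdl π x = 0) {a : H}
    (ha : π.toLinearMap.lTensor H (comul a) = a ⊗ₜ 1) :
    π.toLinearMap.rTensor H (comul a) = 1 ⊗ₜ a := by
  have hT := LinearMap.apply_eq_of_lTensor_eq (π := π.toLinearMap) (u := comul a) (v := a ⊗ₜ 1)
    (f := LinearMap.mul' R (K ⊗[R] H) ∘ₗ map (ι₂ ∘ₗ antipode R) (mapAdl π))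
    (fun x hx y ↦ by simp [hπ x hx]) (by simp [ha])
  have hconv : toConv (ι₂ ∘ₗ antipode R) * toConv (mapAdl π) =
      toConv (ι₁ ∘ₗ π.toLinearMap) * toConv (ι₂ ∘ₗ antipode R) := by
    rw [toConv_mapAdl, ← mul_assoc, AlgHom.toConv_comp_antipode_mul_toConv, one_mul]
  have hmap : LinearMap.mul' R (K ⊗[R] H) ∘ₗ map (ι₁ ∘ₗ π.toLinearMap) (ι₂ ∘ₗ antipode R) =
      map π.toLinearMap (antipode R) := by
    ext x y
    simp
  have hΔ := congr(ofConv $hconv a)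
  rw [LinearMap.convMul_apply, LinearMap.convMul_apply, ← LinearMap.comp_apply (LinearMap.mul' _ _),
    ← LinearMap.comp_apply (LinearMap.mul' _ _), hmap] at hΔ
  rw [hΔ] at hT
  apply Module.Flat.lTensor_preserves_injective_linearMap (M := K) _ hS
  rw [← LinearMap.comp_apply, LinearMap.lTensor_comp_rTensor]
  simpa [mapAdl_one] using hT

end Coinvariants

theorem left_anormal_coinvariants_eq_general {k H K : Type*} [Field k] [Ring H] [Ring K]
    [HopfAlgebra k H] [HopfAlgebra k K] (π : H →ₐc[k] K)
    (hSbij : Function.Bijective (HopfAlgebra.antipode (R := k) (A := H)))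
    (hnormal : ∀ a ∈ LinearMap.ker π.toLinearMap,
      adl k H a ∈ LinearMap.range
        (TensorProduct.mapIncl (LinearMap.ker π.toLinearMap) (⊤ : Submodule k H))) :
    {a : H | LinearMap.rTensor H π.toLinearMap (Coalgebra.comul a) = (1 : K) ⊗ₜ[k] a} =
    {a : H | LinearMap.lTensor H π.toLinearMap (Coalgebra.comul a) = a ⊗ₜ[k] (1 : K)} := by
  have hπ : ∀ x ∈ LinearMap.ker π.toLinearMap, mapAdl (π : H →ₐ[k] K) x = 0 := fun x hx ↦ by
    obtain ⟨ξ, hξ⟩ := hnormal x hx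
    rw [mapAdl, LinearMap.comp_apply, ← hξ, Algebra.TensorProduct.toLinearMap_map,
      TensorProduct.AlgebraTensorModule.map_eq]
    exact TensorProduct.map_mapIncl_ker_eq_zero π.toLinearMap LinearMap.id ⊤ ξ
  ext a
  exact ⟨lTensor_comul_eq_of_rTensor_comul_eq (π : H →ₐ[k] K) hπ,
    rTensor_comul_eq_of_lTensor_comul_eq (π : H →ₐ[k] K) hSbij.1 hπ⟩

/-- If `ker π` is left a-normal and the antipode of `H` is bijective, then the left
and right coinvariant subalgebras for `π` coincide. -/
theorem left_anormal_coinvariants_eq {k H K : Type*} [Field k] [Ring H] [Ring K]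
    [HopfAlgebra k H] [HopfAlgebra k K] (π : H →ₐc[k] K)
    (hsurj : Function.Surjective π)
    (hSbij : Function.Bijective (HopfAlgebra.antipode (R := k) (A := H)))
    (hnormal : ∀ a ∈ LinearMap.ker π.toLinearMap,
      adl k H a ∈ LinearMap.range
        (TensorProduct.mapIncl (LinearMap.ker π.toLinearMap) (⊤ : Submodule k H))) :
    {a : H | LinearMap.rTensor H π.toLinearMap (Coalgebra.comul a) = (1 : K) ⊗ₜ[k] a} =
    {a : H | LinearMap.lTensor H π.toLinearMap (Coalgebra.comul a) = a ⊗ₜ[k] (1 : K)} :=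
  left_anormal_coinvariants_eq_general π hSbij hnormal
end

section
/- Let H, K be Hopf algebras over a field k, π : H → K a surjective Hopf algebra morphism, and s : K → H a k-linear right K-comodule map splitting π (i.e. π ∘ s = id_K and (id ⊗ π)Δ_H ∘ s = (s ⊗ id)Δ_K). Define φ : H → H by φ(a) = Σ s(π(a_(1))) S(a_(2)). Then (id ⊗ π)Δ_H(φ(a)) = φ(a) ⊗ 1 for all a ∈ H, i.e. φ maps H into the right coinvariants H^{co K}. -/
/-!
Work in the convolution algebra of linear maps `H → H ⊗ K`, with `ι₁ a = a ⊗ 1`,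
`ι₂ b = 1 ⊗ b` and the coaction `ρ = (id ⊗ π) ∘ Δ`. Since `ρ` is an algebra map, `ρ ∘ S` is
its convolution inverse; and `ρ = ι₁ ⋆ (ι₂ ∘ π)`, whose inverse is `(ι₂ ∘ π ∘ S) ⋆ (ι₁ ∘ S)`.
The comodule property of `s` gives `ρ ∘ s ∘ π = (ι₁ ∘ s ∘ π) ⋆ (ι₂ ∘ π)`. Hence, as
`φ = (s ∘ π) ⋆ S`, we get `ρ ∘ φ = (ι₁ ∘ s ∘ π) ⋆ (ι₂ ∘ π) ⋆ (ι₂ ∘ π ∘ S) ⋆ (ι₁ ∘ S) = ι₁ ∘ φ`.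
-/

open TensorProduct Coalgebra HopfAlgebra WithConv

namespace LinearMap

variable {R H A : Type*} [CommSemiring R] [Semiring H] [HopfAlgebra R H] [Semiring A]
  [Algebra R A]

lemma algHom_comp_antipode_mul_algHom (f : H →ₐ[R] A) :
    toConv (f.toLinearMap ∘ₗ antipode R) * toConv f.toLinearMap = 1 := by
  apply WithConv.ext
  have := algHom_comp_convMul_distrib f (toConv (antipode R)) (toConv LinearMap.id)
  simp only [comp_id, antipode_mul_id] at this
  rw [← this]
  ext; simp

lemma algHom_mul_algHom_comp_antipode (f : H →ₐ[R] A) :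
    toConv f.toLinearMap * toConv (f.toLinearMap ∘ₗ antipode R) = 1 := by
  apply WithConv.ext
  have := algHom_comp_convMul_distrib f (toConv LinearMap.id) (toConv (antipode R))
  simp only [comp_id, id_mul_antipode] at this
  rw [← this]
  ext; simp

end LinearMap

section TensorProduct

open Algebra.TensorProduct

variable {R C A B : Type*} [CommSemiring R] [AddCommMonoid C] [Module R C] [CoalgebraStruct R C]
  [Semiring A] [Algebra R A] [Semiring B] [Algebra R B]

lemma LinearMap.includeLeft_comp_mul_includeRight_comp (f : C →ₗ[R] A) (g : C →ₗ[R] B) :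
    toConv ((includeLeft : A →ₐ[R] A ⊗[R] B).toLinearMap ∘ₗ f) *
        toConv ((includeRight : B →ₐ[R] A ⊗[R] B).toLinearMap ∘ₗ g) =
      toConv (map f g ∘ₗ comul) := by
  apply WithConv.ext
  rw [LinearMap.convMul_def, ofConv_toConv, ofConv_toConv, ← LinearMap.comp_assoc]
  congr 1
  ext a b
  simp

end TensorProduct

namespace Bialgebra

variable {R H K : Type*} [CommSemiring R] [Semiring H] [Semiring K] [Bialgebra R H] [Bialgebra R K]

noncomputable def rightCoaction (π : H →ₐc[R] K) : H →ₐ[R] H ⊗[R] K :=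
  (Algebra.TensorProduct.map (AlgHom.id R H) (π : H →ₐ[R] K)).comp (comulAlgHom R H)

lemma toLinearMap_rightCoaction (π : H →ₐc[R] K) :
    (rightCoaction π).toLinearMap = π.toLinearMap.lTensor H ∘ₗ comul := by
  ext a
  rfl

lemma rightCoaction_comp_comp_of_comodule (π : H →ₐc[R] K) {s : K →ₗ[R] H}
    (hs : π.toLinearMap.lTensor H ∘ₗ comul ∘ₗ s = s.rTensor K ∘ₗ comul) :
    (rightCoaction π).toLinearMap ∘ₗ s ∘ₗ π.toLinearMap =
      map (s ∘ₗ π.toLinearMap) π.toLinearMap ∘ₗ comul := by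
  calc (rightCoaction π).toLinearMap ∘ₗ s ∘ₗ π.toLinearMap
      = (π.toLinearMap.lTensor H ∘ₗ comul ∘ₗ s) ∘ₗ π.toLinearMap := by
        rw [toLinearMap_rightCoaction]; rfl
    _ = s.rTensor K ∘ₗ map π.toLinearMap π.toLinearMap ∘ₗ comul := by
        rw [hs, LinearMap.comp_assoc]
        exact congrArg _ π.map_comp_comul.symm
    _ = map (s ∘ₗ π.toLinearMap) π.toLinearMap ∘ₗ comul := by
        rw [← LinearMap.comp_assoc, LinearMap.rTensor_comp_map]

end Bialgebra

namespace HopfAlgebra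

open Algebra.TensorProduct Bialgebra

variable {R H K : Type*} [CommSemiring R] [Semiring H] [Semiring K] [HopfAlgebra R H]
  [Bialgebra R K]

theorem rightCoaction_comp_mul_antipode (π : H →ₐc[R] K) {t : H →ₗ[R] H}
    (ht : (rightCoaction π).toLinearMap ∘ₗ t = map t π.toLinearMap ∘ₗ comul) :
    (rightCoaction π).toLinearMap ∘ₗ (toConv t * toConv (antipode R)).ofConv =
      (includeLeft : H →ₐ[R] H ⊗[R] K).toLinearMap ∘ₗ
        (toConv t * toConv (antipode R)).ofConv := by
  set ρ := rightCoaction π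
  set e : H →ₐ[R] H ⊗[R] K := includeLeft
  set j : H →ₐ[R] H ⊗[R] K := includeRight.comp (π : H →ₐ[R] K)
  have hρ : toConv ρ.toLinearMap = toConv e.toLinearMap * toConv j.toLinearMap :=
    ((LinearMap.includeLeft_comp_mul_includeRight_comp LinearMap.id π.toLinearMap).trans
      (congrArg toConv (toLinearMap_rightCoaction π).symm)).symm
  have hρt :
      toConv (ρ.toLinearMap ∘ₗ t) = toConv (e.toLinearMap ∘ₗ t) * toConv j.toLinearMap :=
    (congrArg toConv ht).trans
      (LinearMap.includeLeft_comp_mul_includeRight_comp t π.toLinearMap).symm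
  have hρS : toConv (ρ.toLinearMap ∘ₗ antipode R) =
      toConv (j.toLinearMap ∘ₗ antipode R) * toConv (e.toLinearMap ∘ₗ antipode R) := by
    refine left_inv_eq_right_inv (LinearMap.algHom_comp_antipode_mul_algHom ρ) ?_
    rw [hρ, mul_assoc, ← mul_assoc (toConv j.toLinearMap),
      LinearMap.algHom_mul_algHom_comp_antipode, one_mul,
      LinearMap.algHom_mul_algHom_comp_antipode]
  rw [LinearMap.algHom_comp_convMul_distrib, LinearMap.algHom_comp_convMul_distrib, hρt,
    hρS, mul_assoc, ← mul_assoc (toConv j.toLinearMap),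
    LinearMap.algHom_mul_algHom_comp_antipode, one_mul]

end HopfAlgebra

open Bialgebra in
theorem phi_mem_coinvariants_general {k H K : Type*} [Field k] [Ring H] [Ring K]
    [HopfAlgebra k H] [HopfAlgebra k K] (π : H →ₐc[k] K)
    (s : K →ₗ[k] H)
    (hcomod : (LinearMap.lTensor H π.toLinearMap) ∘ₗ Coalgebra.comul ∘ₗ s =
      (LinearMap.rTensor K s) ∘ₗ Coalgebra.comul)
    (φ : H →ₗ[k] H)
    (hφ : φ = LinearMap.mul' k H ∘ₗ
      TensorProduct.map (s ∘ₗ π.toLinearMap) (HopfAlgebra.antipode (R := k)) ∘ₗ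
      Coalgebra.comul) :
    ∀ a : H,
      LinearMap.lTensor H π.toLinearMap (Coalgebra.comul (φ a)) = φ a ⊗ₜ[k] (1 : K) := by
  intro a
  have hφ_conv : φ = (toConv (s ∘ₗ π.toLinearMap) * toConv (antipode k)).ofConv := hφ
  have key := congr($(rightCoaction_comp_mul_antipode π
    (rightCoaction_comp_comp_of_comodule π hcomod)) a)
  rw [← hφ_conv, toLinearMap_rightCoaction] at key
  exact key

/-- If `s : K → H` is a right `K`-comodule splitting of a surjective Hopf algebra
morphism `π : H → K`, then `φ(a) = Σ s(π(a₍₁₎)) S(a₍₂₎)` takes values in the right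
coinvariants `H^{co K}`. -/
theorem phi_mem_coinvariants {k H K : Type*} [Field k] [Ring H] [Ring K]
    [HopfAlgebra k H] [HopfAlgebra k K] (π : H →ₐc[k] K)
    (hsurj : Function.Surjective π)
    (s : K →ₗ[k] H) (hsplit : π.toLinearMap ∘ₗ s = LinearMap.id)
    (hcomod : (LinearMap.lTensor H π.toLinearMap) ∘ₗ Coalgebra.comul ∘ₗ s =
      (LinearMap.rTensor K s) ∘ₗ Coalgebra.comul)
    (φ : H →ₗ[k] H)
    (hφ : φ = LinearMap.mul' k H ∘ₗ
      TensorProduct.map (s ∘ₗ π.toLinearMap) (HopfAlgebra.antipode (R := k)) ∘ₗ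
      Coalgebra.comul) :
    ∀ a : H,
      LinearMap.lTensor H π.toLinearMap (Coalgebra.comul (φ a)) = φ a ⊗ₜ[k] (1 : K) :=
  phi_mem_coinvariants_general π s hcomod φ hφ
end

section
/- Let H be a Hopf algebra, and let π : H → K and θ : H → L be surjective Hopf algebra morphisms with ker(θ) ⊆ ker(π); let π₁ : L → K be the induced surjection with π = π₁ ∘ θ. If ker(π) is a-normal in H (i.e. ad_l and ad_r of H preserve ker(π) ⊗ H), then ker(π₁) is a-normal in L. -/
open TensorProduct Coalgebra HopfAlgebra

/-! Bialgebra morphisms between Hopf algebras commute with the antipodes (`f ∘ S` and `S ∘ f`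
are a left and a right convolution inverse of `f`), so `θ ⊗ θ` intertwines the adjoint
coactions of `H` and `L`. As `θ` maps `ker π` into `ker π₁`, it carries
`ad(ker π) ⊆ ker π ⊗ H` into `ker π₁ ⊗ L`, and by surjectivity every element of `ker π₁` is
`θ a` with `a ∈ ker π`. -/

open WithConv

theorem BialgHom.map_antipode {k H L : Type*} [CommSemiring k] [Semiring H] [Semiring L]
    [HopfAlgebra k H] [HopfAlgebra k L] (f : H →ₐc[k] L) (a : H) :
    f (antipode k a) = antipode k (f a) := by
  have hleft : toConv ((f : H →ₗ[k] L) ∘ₗ antipode k) * toConv (f : H →ₗ[k] L) = 1 := by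
    have hdistrib := LinearMap.algHom_comp_convMul_distrib (f : H →ₐ[k] L)
      (toConv (antipode k)) (toConv .id)
    rw [LinearMap.antipode_mul_id] at hdistrib
    apply WithConv.ofConv_injective
    convert hdistrib.symm using 1
    · rfl
    · ext x
      simp [AlgHomClass.commutes]
  have hright : toConv (f : H →ₗ[k] L) * toConv (antipode k ∘ₗ (f : H →ₗ[k] L)) = 1 := by
    have hdistrib := LinearMap.convMul_comp_coalgHom_distrib (toConv .id)
      (toConv (antipode k)) (f : H →ₗc[k] L)
    rw [LinearMap.id_mul_antipode] at hdistrib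
    apply WithConv.ofConv_injective
    convert hdistrib.symm using 1
    · rfl
    · ext x
      simp
  exact congr($(left_inv_eq_right_inv hleft hright) a)

section Naturality

variable {k H L : Type*} [CommRing k] [Ring H] [Ring L]

lemma adlWith_eq_sum [Bialgebra k H] (S : H →ₗ[k] H) {a : H} {ι κ : Type*}
    (r : Coalgebra.Repr k a ι) (r₂ : ∀ i, Coalgebra.Repr k (r.right i) κ) :
    adlWith k H S a = ∑ i ∈ r.index, ∑ j ∈ (r₂ i).index,
      (r₂ i).left j ⊗ₜ[k] (r.left i * S ((r₂ i).right j)) := by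
  simp only [adlWith, LinearMap.comp_apply]
  rw [← r.eq]
  simp only [map_sum, LinearMap.lTensor_tmul, ← (r₂ _).eq, tmul_sum,
    LinearEquiv.coe_coe, assoc_symm_tmul, LinearMap.rTensor_tmul, comm_tmul, assoc_tmul,
    LinearMap.mul'_apply]

lemma adrWith_eq_sum [Bialgebra k H] (S : H →ₗ[k] H) {a : H} {ι κ : Type*}
    (r : Coalgebra.Repr k a ι) (r₂ : ∀ i, Coalgebra.Repr k (r.right i) κ) :
    adrWith k H S a = ∑ i ∈ r.index, ∑ j ∈ (r₂ i).index,
      (r₂ i).left j ⊗ₜ[k] (S (r.left i) * (r₂ i).right j) := by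
  simp only [adrWith, LinearMap.comp_apply]
  rw [← r.eq]
  simp only [map_sum, LinearMap.lTensor_tmul, ← (r₂ _).eq, tmul_sum,
    LinearEquiv.coe_coe, assoc_symm_tmul, LinearMap.rTensor_tmul, comm_tmul, assoc_tmul,
    LinearMap.mul'_apply]

variable [Bialgebra k H] [Bialgebra k L] (f : H →ₐc[k] L)
  {S : H →ₗ[k] H} {S' : L →ₗ[k] L}

lemma map_adlWith (hS : ∀ x, f (S x) = S' (f x)) (a : H) :
    map (f : H →ₗ[k] L) f (adlWith k H S a) = adlWith k L S' (f a) := by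
  rw [adlWith_eq_sum S (ℛ k a) fun i ↦ ℛ k _,
    adlWith_eq_sum S' ((ℛ k a).induced f) fun i ↦ (ℛ k _).induced f]
  simp [hS]

lemma map_adrWith (hS : ∀ x, f (S x) = S' (f x)) (a : H) :
    map (f : H →ₗ[k] L) f (adrWith k H S a) = adrWith k L S' (f a) := by
  rw [adrWith_eq_sum S (ℛ k a) fun i ↦ ℛ k _,
    adrWith_eq_sum S' ((ℛ k a).induced f) fun i ↦ (ℛ k _).induced f]
  simp [hS]

end Naturality

lemma map_adl {k H L : Type*} [CommRing k] [Ring H] [Ring L] [HopfAlgebra k H]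
    [HopfAlgebra k L] (f : H →ₐc[k] L) (a : H) :
    map (f : H →ₗ[k] L) f (adl k H a) = adl k L (f a) :=
  map_adlWith f (BialgHom.map_antipode f) a

lemma map_adr {k H L : Type*} [CommRing k] [Ring H] [Ring L] [HopfAlgebra k H]
    [HopfAlgebra k L] (f : H →ₐc[k] L) (a : H) :
    map (f : H →ₗ[k] L) f (adr k H a) = adr k L (f a) :=
  map_adrWith f (BialgHom.map_antipode f) a

lemma TensorProduct.map_mem_range_mapIncl {R M N P Q : Type*} [CommSemiring R]
    [AddCommMonoid M] [AddCommMonoid N] [AddCommMonoid P] [AddCommMonoid Q]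
    [Module R M] [Module R N] [Module R P] [Module R Q] {f : M →ₗ[R] P} {g : N →ₗ[R] Q}
    {p : Submodule R M} {q : Submodule R N} {p' : Submodule R P} {q' : Submodule R Q}
    (hf : p ≤ p'.comap f) (hg : q ≤ q'.comap g) {t : M ⊗[R] N}
    (ht : t ∈ LinearMap.range (mapIncl p q)) :
    map f g t ∈ LinearMap.range (mapIncl p' q') := by
  obtain ⟨s, rfl⟩ := ht
  refine ⟨map (f.restrict hf) (g.restrict hg) s, ?_⟩
  simp only [mapIncl, ← LinearMap.comp_apply, ← map_comp]
  rfl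

theorem induced_ker_anormal_general {k H K L : Type*} [Field k] [Ring H] [Ring K] [Ring L]
    [HopfAlgebra k H] [HopfAlgebra k K] [HopfAlgebra k L]
    (π : H →ₐc[k] K) (θ : H →ₐc[k] L) (π₁ : L →ₐc[k] K)
    (hθ : Function.Surjective θ)
    (hcomp : ∀ x : H, π x = π₁ (θ x))
    (hnormal : ∀ a ∈ LinearMap.ker π.toLinearMap,
      adl k H a ∈ LinearMap.range
        (TensorProduct.mapIncl (LinearMap.ker π.toLinearMap) (⊤ : Submodule k H)) ∧
      adr k H a ∈ LinearMap.range
        (TensorProduct.mapIncl (LinearMap.ker π.toLinearMap) (⊤ : Submodule k H))) :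
    ∀ b ∈ LinearMap.ker π₁.toLinearMap,
      adl k L b ∈ LinearMap.range
        (TensorProduct.mapIncl (LinearMap.ker π₁.toLinearMap) (⊤ : Submodule k L)) ∧
      adr k L b ∈ LinearMap.range
        (TensorProduct.mapIncl (LinearMap.ker π₁.toLinearMap) (⊤ : Submodule k L)) := by
  intro b hb
  obtain ⟨a, rfl⟩ := hθ b
  have ha : π a = 0 := (hcomp a).trans hb
  have hθ_ker : LinearMap.ker π.toLinearMap ≤
      (LinearMap.ker π₁.toLinearMap).comap θ.toLinearMap :=
    fun x hx ↦ (hcomp x).symm.trans hx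
  obtain ⟨hl, hr⟩ := hnormal a ha
  exact ⟨map_adl θ a ▸ map_mem_range_mapIncl hθ_ker le_top hl,
    map_adr θ a ▸ map_mem_range_mapIncl hθ_ker le_top hr⟩

/-- If `π : H → K` factors as `π = π₁ ∘ θ` through a surjective Hopf algebra morphism
`θ : H → L` and `ker π` is a-normal in `H`, then `ker π₁` is a-normal in `L`. -/
theorem induced_ker_anormal {k H K L : Type*} [Field k] [Ring H] [Ring K] [Ring L]
    [HopfAlgebra k H] [HopfAlgebra k K] [HopfAlgebra k L]
    (π : H →ₐc[k] K) (θ : H →ₐc[k] L) (π₁ : L →ₐc[k] K)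
    (hπ : Function.Surjective π) (hθ : Function.Surjective θ)
    (hπ₁ : Function.Surjective π₁)
    (hcomp : ∀ x : H, π x = π₁ (θ x))
    (hker : LinearMap.ker θ.toLinearMap ≤ LinearMap.ker π.toLinearMap)
    (hnormal : ∀ a ∈ LinearMap.ker π.toLinearMap,
      adl k H a ∈ LinearMap.range
        (TensorProduct.mapIncl (LinearMap.ker π.toLinearMap) (⊤ : Submodule k H)) ∧
      adr k H a ∈ LinearMap.range
        (TensorProduct.mapIncl (LinearMap.ker π.toLinearMap) (⊤ : Submodule k H))) :
    ∀ b ∈ LinearMap.ker π₁.toLinearMap,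
      adl k L b ∈ LinearMap.range
        (TensorProduct.mapIncl (LinearMap.ker π₁.toLinearMap) (⊤ : Submodule k L)) ∧
      adr k L b ∈ LinearMap.range
        (TensorProduct.mapIncl (LinearMap.ker π₁.toLinearMap) (⊤ : Submodule k L)) :=
  induced_ker_anormal_general π θ π₁ hθ hcomp hnormal
end

section
/- Let H be a Hopf algebra over a field k with bijective antipode S, and let I be a Hopf ideal of H with quotient morphism π : H → H/I. If I is right a-normal (ad_r(a) = Σ a_(2) ⊗ S(a_(1))a_(3) ∈ I ⊗ H for all a ∈ I), then the right coinvariants are contained in the left coinvariants: { a ∈ H : (id ⊗ π)Δ(a) = a ⊗ 1 } ⊆ { a ∈ H : (π ⊗ id)Δ(a) = 1 ⊗ a }. -/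
/-!
The identity `Σ a₍₃₎ ⊗ a₍₁₎ S(a₍₂₎) a₍₄₎ = Σ a₍₁₎ ⊗ a₍₂₎` (coassociativity plus the antipode
axiom) recovers `Δ a` from `(id ⊗ ad_r) Δ a` by moving the first tensor factor into the last one.
For a right coinvariant `a`, exactness of `H ⊗ -` (everything is flat over a field) gives
`Δ a = a ⊗ 1 + w` with `w ∈ H ⊗ I`. Under the identity, `a ⊗ 1` contributes `1 ⊗ a`, since
`ad_r 1 = 1 ⊗ 1`, while `w` contributes an element of `I ⊗ H` by right a-normality, which `π ⊗ id`
kills.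
-/

open TensorProduct Coalgebra HopfAlgebra

section MulSnd

variable (k H : Type*) [CommSemiring k] [Semiring H] [Algebra k H]

noncomputable def mulSnd : H ⊗[k] (H ⊗[k] H) →ₗ[k] H ⊗[k] H :=
  (LinearMap.lTensor H (LinearMap.mul' k H)) ∘ₗ
  (TensorProduct.assoc k H H H).toLinearMap ∘ₗ
  (LinearMap.rTensor H (TensorProduct.comm k H H).toLinearMap) ∘ₗ
  (TensorProduct.assoc k H H H).symm.toLinearMap

variable {k H}

@[simp] lemma mulSnd_tmul_tmul (u x v : H) :
    mulSnd k H (u ⊗ₜ[k] (x ⊗ₜ[k] v)) = x ⊗ₜ[k] (u * v) := by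
  simp [mulSnd]

lemma mulSnd_tmul (u : H) (t : H ⊗[k] H) : mulSnd k H (u ⊗ₜ[k] t) = (1 ⊗ₜ[k] u) * t := by
  induction t using TensorProduct.induction_on with
  | zero => simp
  | tmul x v => simp
  | add x y hx hy => rw [TensorProduct.tmul_add, map_add, hx, hy, mul_add]

lemma mulSnd_one_tmul (t : H ⊗[k] H) : mulSnd k H ((1 : H) ⊗ₜ[k] t) = t := by
  rw [mulSnd_tmul, Algebra.TensorProduct.one_def.symm, one_mul]

lemma mulSnd_tmul_mulSnd (b c : H) (t : H ⊗[k] H) :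
    mulSnd k H (b ⊗ₜ[k] mulSnd k H (c ⊗ₜ[k] t)) = mulSnd k H ((b * c) ⊗ₜ[k] t) := by
  simp only [mulSnd_tmul, ← mul_assoc, Algebra.TensorProduct.tmul_mul_tmul, one_mul]

lemma mulSnd_tmul_mem_range_mapIncl (I : Submodule k H) (x : H) {t : H ⊗[k] H}
    (ht : t ∈ LinearMap.range (TensorProduct.mapIncl I (⊤ : Submodule k H))) :
    mulSnd k H (x ⊗ₜ[k] t) ∈ LinearMap.range (TensorProduct.mapIncl I (⊤ : Submodule k H)) := by
  rw [TensorProduct.range_mapIncl] at ht ⊢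
  refine Submodule.mem_comap.mp <| (Submodule.map₂_le (r := Submodule.comap
    (mulSnd k H ∘ₗ TensorProduct.mk k H (H ⊗[k] H) x) _)).mpr
    (fun i hi v _ ↦ ?_) ht
  simpa using Submodule.apply_mem_map₂ (TensorProduct.mk k H H) hi (Submodule.mem_top (x := x * v))

end MulSnd

lemma rTensor_apply_eq_zero_of_mem_range_mapIncl_ker {k M N P : Type*} [CommSemiring k]
    [AddCommMonoid M] [AddCommMonoid N] [AddCommMonoid P] [Module k M] [Module k N] [Module k P]
    (f : M →ₗ[k] N) {t : M ⊗[k] P}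
    (ht : t ∈ LinearMap.range (TensorProduct.mapIncl (LinearMap.ker f) (⊤ : Submodule k P))) :
    LinearMap.rTensor P f t = 0 := by
  rw [TensorProduct.range_mapIncl] at ht
  refine (Submodule.map₂_le (r := LinearMap.ker (LinearMap.rTensor P f))).mpr
    (fun m hm p _ ↦ ?_) ht
  simp [LinearMap.mem_ker.mp hm]

section Hopf

variable {k H : Type*} [CommRing k] [Ring H] [HopfAlgebra k H]

lemma adr_eq_mulSnd_comp :
    adr k H = mulSnd k H ∘ₗ LinearMap.rTensor (H ⊗[k] H) (antipode k) ∘ₗ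
      LinearMap.lTensor H (comul (R := k)) ∘ₗ comul :=
  rfl

lemma adr_one : adr k H 1 = (1 : H) ⊗ₜ[k] (1 : H) := by
  simp [adr_eq_mulSnd_comp, Algebra.TensorProduct.one_def]

lemma rTensor_mul_lTensor_antipode_rTensor_comul_comul (a : H) :
    LinearMap.rTensor H (LinearMap.mul' k H ∘ₗ LinearMap.lTensor H (antipode k))
      (LinearMap.rTensor H (comul (R := k)) (comul a)) = (1 : H) ⊗ₜ[k] a := by
  rw [← LinearMap.comp_apply, ← LinearMap.rTensor_comp, LinearMap.comp_assoc,
    mul_antipode_lTensor_comul, LinearMap.rTensor_comp, LinearMap.comp_apply,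
    rTensor_counit_comul]
  simp

/-- `Σ a₍₃₎ ⊗ a₍₁₎ S(a₍₂₎) a₍₄₎ = Σ a₍₁₎ ⊗ a₍₂₎`. -/
lemma mulSnd_lTensor_adr_comul (a : H) :
    mulSnd k H (LinearMap.lTensor H (adr k H) (comul a)) = comul a := by
  set Φ : H ⊗[k] H →ₗ[k] H ⊗[k] H := mulSnd k H ∘ₗ LinearMap.rTensor (H ⊗[k] H) (antipode k) ∘ₗ
    LinearMap.lTensor H (comul (R := k))
  have hΦ : mulSnd k H ∘ₗ LinearMap.lTensor H Φ ∘ₗ (TensorProduct.assoc k H H H).toLinearMap =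
      mulSnd k H ∘ₗ LinearMap.lTensor H (comul (R := k)) ∘ₗ
        LinearMap.rTensor H (LinearMap.mul' k H ∘ₗ LinearMap.lTensor H (antipode k)) :=
    TensorProduct.ext_threefold fun x y z ↦ by simp [Φ, mulSnd_tmul_mulSnd]
  calc mulSnd k H (LinearMap.lTensor H (adr k H) (comul a))
      = mulSnd k H (LinearMap.lTensor H Φ (LinearMap.lTensor H comul (comul a))) := by
        rw [show adr k H = Φ ∘ₗ comul from rfl, LinearMap.lTensor_comp_apply]
    _ = mulSnd k H (LinearMap.lTensor H Φ
          (TensorProduct.assoc k H H H (LinearMap.rTensor H comul (comul a)))) := by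
        rw [coassoc_apply]
    _ = mulSnd k H (LinearMap.lTensor H comul ((1 : H) ⊗ₜ[k] a)) := by
        rw [← rTensor_mul_lTensor_antipode_rTensor_comul_comul a]
        exact LinearMap.congr_fun hΦ _
    _ = comul a := by rw [LinearMap.lTensor_tmul, mulSnd_one_tmul]

end Hopf

section Anormal

variable {k H : Type*} [CommRing k] [Ring H] [HopfAlgebra k H] {I : Submodule k H}

lemma mulSnd_lTensor_adr_mem_of_anormal
    (hI : ∀ y ∈ I, adr k H y ∈ LinearMap.range (TensorProduct.mapIncl I (⊤ : Submodule k H)))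
    (w : H ⊗[k] I) :
    mulSnd k H (LinearMap.lTensor H (adr k H) (LinearMap.lTensor H I.subtype w)) ∈
      LinearMap.range (TensorProduct.mapIncl I (⊤ : Submodule k H)) := by
  induction w using TensorProduct.induction_on with
  | zero => simp
  | tmul x y => exact mulSnd_tmul_mem_range_mapIncl I x (hI y y.2)
  | add v w hv hw => simpa only [map_add] using add_mem hv hw

lemma comul_sub_one_tmul_mem_of_anormal
    (hI : ∀ y ∈ I, adr k H y ∈ LinearMap.range (TensorProduct.mapIncl I (⊤ : Submodule k H)))
    {a : H} (ha : comul a - a ⊗ₜ[k] (1 : H) ∈ LinearMap.range (LinearMap.lTensor H I.subtype)) :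
    comul a - (1 : H) ⊗ₜ[k] a ∈ LinearMap.range (TensorProduct.mapIncl I (⊤ : Submodule k H)) := by
  obtain ⟨w, hw⟩ := ha
  have hmulSnd : mulSnd k H (LinearMap.lTensor H (adr k H) (LinearMap.lTensor H I.subtype w)) =
      comul a - (1 : H) ⊗ₜ[k] a := by
    rw [hw, map_sub, map_sub, mulSnd_lTensor_adr_comul, LinearMap.lTensor_tmul, adr_one,
      mulSnd_tmul_tmul, mul_one]
  exact hmulSnd ▸ mulSnd_lTensor_adr_mem_of_anormal hI w

end Anormal

theorem right_anormal_coinv_subset_general {k H K : Type*} [Field k] [Ring H] [Ring K]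
    [HopfAlgebra k H] [HopfAlgebra k K] (π : H →ₐc[k] K)
    (I : Submodule k H) (hI : I = LinearMap.ker π.toLinearMap)
    (hanormal : ∀ a ∈ I,
      adr k H a ∈ LinearMap.range (TensorProduct.mapIncl I (⊤ : Submodule k H))) :
    {a : H | LinearMap.lTensor H π.toLinearMap (Coalgebra.comul a) = a ⊗ₜ[k] (1 : K)} ⊆
    {a : H | LinearMap.rTensor H π.toLinearMap (Coalgebra.comul a) = (1 : K) ⊗ₜ[k] a} := by
  intro a ha
  subst hI
  have hπ1 : π.toLinearMap 1 = 1 := map_one π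
  have hexact := Module.Flat.lTensor_exact H (LinearMap.exact_subtype_ker_map π.toLinearMap)
  have hsub : comul a - a ⊗ₜ[k] (1 : H) ∈
      LinearMap.range (LinearMap.lTensor H (LinearMap.ker π.toLinearMap).subtype) := by
    rw [← LinearMap.exact_iff.mp hexact, LinearMap.mem_ker, map_sub, ha,
      LinearMap.lTensor_tmul, hπ1, sub_self]
  have hzero := rTensor_apply_eq_zero_of_mem_range_mapIncl_ker π.toLinearMap
    (comul_sub_one_tmul_mem_of_anormal hanormal hsub)
  rwa [map_sub, sub_eq_zero, LinearMap.rTensor_tmul, hπ1] at hzero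

/-- If the antipode of `H` is bijective and the Hopf ideal `I = ker π` is right
a-normal, then the right coinvariants for `π` are contained in the left coinvariants. -/
theorem right_anormal_coinv_subset {k H K : Type*} [Field k] [Ring H] [Ring K]
    [HopfAlgebra k H] [HopfAlgebra k K] (π : H →ₐc[k] K)
    (hsurj : Function.Surjective π)
    (hSbij : Function.Bijective (HopfAlgebra.antipode (R := k) (A := H)))
    (I : Submodule k H) (hI : I = LinearMap.ker π.toLinearMap)
    (hanormal : ∀ a ∈ I,
      adr k H a ∈ LinearMap.range (TensorProduct.mapIncl I (⊤ : Submodule k H))) :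
    {a : H | LinearMap.lTensor H π.toLinearMap (Coalgebra.comul a) = a ⊗ₜ[k] (1 : K)} ⊆
    {a : H | LinearMap.rTensor H π.toLinearMap (Coalgebra.comul a) = (1 : K) ⊗ₜ[k] a} :=
  right_anormal_coinv_subset_general π I hI hanormal
end
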